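/- Let C = ⟨(b|0), (ℓ | fh + 2f)⟩ be a Z2Z4-additive cyclic code with β odd and fgh = x^β − 1 in Z4[x]. If the order-two subcode satisfies C_b = ⟨(b|0), (0|2f)⟩, then Φ(C) is a linear binary code if and only if φ(C_Y) is a linear binary code. -/

import Mathlib

open Polynomial

noncomputable section

abbrev Z2 := ZMod 2
abbrev Z4 := ZMod 4

/-- Coefficientwise reduction modulo 2. -/
def ρ : Z4 →+* Z2 := ZMod.castHom (show 2 ∣ 4 by norm_num) Z2

/-- The quotient ring `R[x]/(x^n - 1)`. -/
abbrev QR (R : Type) [CommRing R] (n : ℕ) :=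
  Polynomial R ⧸ Ideal.span {(Polynomial.X : Polynomial R) ^ n - 1}

def pmk {R : Type} [CommRing R] (n : ℕ) (p : Polynomial R) : QR R n :=
  Ideal.Quotient.mk _ p

/-- `Z4[x]`-module structure on `Z2[x]/(x^n-1)` via reduction mod 2;
this gives the action `p ⋆ (b | a) = (p̃ b | p a)` on the product. -/
instance (n : ℕ) : Module (Polynomial Z4) (QR Z2 n) :=
  Module.compHom _ ((Ideal.Quotient.mk _).comp (mapRingHom ρ) : Polynomial Z4 →+* QR Z2 n)

def hat (u : Z4) : Z2 := ((u.val / 2 : ℕ) : Z2)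

def til (u : Z4) : Z2 := ((u.val : ℕ) : Z2)

/-- The Gray map `φ(u') = (û' | ũ' + û')`, with the second block of coordinates
indexed by the right summand. -/
def gray {ι : Type} (u : ι → Z4) : (ι ⊕ ι) → Z2 :=
  Sum.elim (fun i => hat (u i)) (fun i => til (u i) + hat (u i))

/-- The extended Gray map `Φ(u | u') = (u | φ(u'))`. -/
def extGray {ι κ : Type} (v : (ι → Z2) × (κ → Z4)) : (ι → Z2) × ((κ ⊕ κ) → Z2) :=
  (v.1, gray v.2)

/-- Identification of `Z2^n` with `Z2[x]/(x^n-1)`. -/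
def toQ2 {n : ℕ} (u : Fin n → Z2) : QR Z2 n :=
  pmk n (∑ i, Polynomial.C (u i) * Polynomial.X ^ (i : ℕ))

/-- Identification of `Z4^n` with `Z4[x]/(x^n-1)`. -/
def toQ4 {n : ℕ} (u : Fin n → Z4) : QR Z4 n :=
  pmk n (∑ i, Polynomial.C (u i) * Polynomial.X ^ (i : ℕ))

/-- The standard polynomial identification of `Z2^α × Z4^β` with `R_{α,β}`. -/
def ident {α β : ℕ} (v : (Fin α → Z2) × (Fin β → Z4)) : QR Z2 α × QR Z4 β :=
  (toQ2 v.1, toQ4 v.2)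

/-- Right cyclic shift: `(u_0,…,u_{n-1}) ↦ (u_{n-1},u_0,…,u_{n-2})`. -/
def shiftR {n : ℕ} {R : Type} (u : Fin n → R) : Fin n → R :=
  fun i => u ((finRotate n).symm i)

/-- Simultaneous cyclic shift on both blocks of `Z2^α × Z4^β`. -/
def bshift {α β : ℕ} (v : (Fin α → Z2) × (Fin β → Z4)) : (Fin α → Z2) × (Fin β → Z4) :=
  (shiftR v.1, shiftR v.2)

/-- `IsTensorSquare n p q` says that `q = (p ⊗ p)`: `q` is the (monic) divisor of
`x^n - 1` in `Z2[x]` whose roots (in the splitting field of `x^n-1`) are exactly the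
products of pairs of roots of `p`. -/
def IsTensorSquare (n : ℕ) (p q : Polynomial Z2) : Prop :=
  q ∣ (Polynomial.X ^ n - 1) ∧ q.Monic ∧
    ∀ z : ((Polynomial.X : Polynomial Z2) ^ n - 1).SplittingField,
      Polynomial.aeval z q = 0 ↔
        ∃ z₁ z₂, Polynomial.aeval z₁ p = 0 ∧ Polynomial.aeval z₂ p = 0 ∧ z = z₁ * z₂

/-- The Nechaev permutation on `Z2^{2n}` (coordinates indexed by `Fin n ⊕ Fin n`,
with `inr i` standing for position `n + i`): it swaps positions `2i+1` and `n + 2i+1`. -/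
def nechaev {n : ℕ} (v : (Fin n ⊕ Fin n) → Z2) : (Fin n ⊕ Fin n) → Z2 :=
  Sum.elim (fun i => if Odd (i : ℕ) then v (Sum.inr i) else v (Sum.inl i))
    (fun i => if Odd (i : ℕ) then v (Sum.inl i) else v (Sum.inr i))

/-- The extended Nechaev–Gray map `Ψ(u | u') = (u | σ(φ(u')))`. -/
def nechaevGrayExt {α β : ℕ} (v : (Fin α → Z2) × (Fin β → Z4)) :
    (Fin α → Z2) × ((Fin β ⊕ Fin β) → Z2) :=
  (v.1, nechaev (gray v.2))

/-- Identification of `Z2^{2n}` (indexed by `Fin n ⊕ Fin n`) with `Z2[x]/(x^{2n}-1)`. -/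
def toQ2D {n : ℕ} (w : (Fin n ⊕ Fin n) → Z2) : QR Z2 (2 * n) :=
  pmk (2 * n) (∑ i : Fin n,
    (Polynomial.C (w (Sum.inl i)) * Polynomial.X ^ (i : ℕ) +
      Polynomial.C (w (Sum.inr i)) * Polynomial.X ^ (n + (i : ℕ))))

/-- Identification of `Z2^α × Z2^{2β}` with `Z2[x]/(x^α-1) × Z2[x]/(x^{2β}-1)`. -/
def pairD {α β : ℕ} (v : (Fin α → Z2) × ((Fin β ⊕ Fin β) → Z2)) :
    QR Z2 α × QR Z2 (2 * β) :=
  (toQ2 v.1, toQ2D v.2)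

def leeWt (u : Z4) : ℕ := min u.val (4 - u.val)

def leeDist {n : ℕ} (u v : Fin n → Z4) : ℕ := ∑ i, leeWt (u i - v i)

/-! A set of binary vectors is linear iff it is closed under addition. Since
`φ(u) + φ(v) = φ(u + v + 2 (u * v))` and `φ` is injective, `Φ(C)` is linear iff
`(0 | 2 (u' * v')) ∈ C` for all `u, v ∈ C`, and `φ(C_Y)` is linear iff `2 (u' * v') ∈ C_Y`
for all `u', v' ∈ C_Y`. The hypothesis on `C_b` identifies the two conditions: a codeword
`(x | 2 w)` has order two, so it lies in `⟨(b|0), (0|2f)⟩`, whence `(0 | 2 w) ∈ C`. -/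

theorem exists_submodule_coe_eq_image_iff {A M : Type*} [AddCommGroup A] [AddCommGroup M]
    [Module (ZMod 2) M] {G : A → M} (hG : Function.Injective G) (e : A → A → A)
    (hGe : ∀ u v, G (u + v + e u v) = G u + G v) (D : AddSubgroup A) :
    (∃ S : Submodule (ZMod 2) M, (S : Set M) = G '' D) ↔ ∀ u ∈ D, ∀ v ∈ D, e u v ∈ D := by
  constructor
  · rintro ⟨S, hS⟩ u hu v hv
    have hG_mem : ∀ z ∈ D, G z ∈ S := fun z hz => by
      rw [← SetLike.mem_coe, hS]
      exact ⟨z, hz, rfl⟩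
    have hsum : G u + G v ∈ G '' D := hS ▸ S.add_mem (hG_mem u hu) (hG_mem v hv)
    obtain ⟨w, hw, hwG⟩ := hsum
    obtain rfl : w = u + v + e u v := hG (hwG.trans (hGe u v).symm)
    simpa using D.sub_mem hw (D.add_mem hu hv)
  · intro he
    have hadd : ∀ u ∈ D, ∀ v ∈ D, G u + G v ∈ G '' D := fun u hu v hv =>
      ⟨_, D.add_mem (D.add_mem hu hv) (he u hu v hv), hGe u v⟩
    refine ⟨AddSubgroup.toZModSubmodule 2
      { carrier := G '' D
        add_mem' := ?_
        zero_mem' := ?_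
        neg_mem' := ?_ }, rfl⟩
    · rintro _ _ ⟨u, hu, rfl⟩ ⟨v, hv, rfl⟩
      exact hadd u hu v hv
    · simpa [ZModModule.add_self] using hadd 0 D.zero_mem 0 D.zero_mem
    · intro x hx
      rwa [ZModModule.neg_eq_self]

theorem Submodule.mk_zero_snd_mem_of_two_nsmul_eq_zero {R M N : Type*} [Semiring R]
    [AddCommMonoid M] [AddCommMonoid N] [Module R M] [Module R N] {C : Submodule R (M × N)}
    {x : M} {y : N} (hC : {c | c ∈ C ∧ 2 • c = 0} = (span R {(x, 0), (0, y)} : Set (M × N)))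
    {c : M × N} (hc : c ∈ C) (h2 : 2 • c = 0) : ((0 : M), c.2) ∈ C := by
  have hspan : span R {(x, 0), (0, y)} ≤ C := fun z hz => ((Set.ext_iff.mp hC z).mpr hz).1
  obtain ⟨r, s, rfl⟩ := mem_span_pair.mp ((Set.ext_iff.mp hC c).mp ⟨hc, h2⟩)
  have : ((0 : M), (r • (x, (0 : N)) + s • ((0 : M), y)).2) = s • ((0 : M), y) := by
    simp
  rw [this]
  exact hspan (smul_mem _ s (subset_span (by simp)))

theorem hat_add_add_two_mul (a b : Z4) : hat (a + b + 2 * (a * b)) = hat a + hat b := by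
  revert a b; decide

theorem til_add_add_two_mul (a b : Z4) : til (a + b + 2 * (a * b)) = til a + til b := by
  revert a b; decide

theorem eq_of_hat_eq_of_til_eq {a b : Z4} : hat a = hat b → til a = til b → a = b := by
  revert a b; decide

theorem gray_add_add_two_mul {ι : Type} (u v : ι → Z4) :
    gray (u + v + 2 * (u * v)) = gray u + gray v := by
  funext x
  cases x with
  | inl i => exact hat_add_add_two_mul (u i) (v i)
  | inr i =>
    show til (u i + v i + 2 * (u i * v i)) + hat (u i + v i + 2 * (u i * v i)) = _
    rw [hat_add_add_two_mul, til_add_add_two_mul]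
    exact add_add_add_comm _ _ _ _

theorem gray_injective {ι : Type} : Function.Injective (gray (ι := ι)) := by
  intro u v h
  funext i
  have hhat : hat (u i) = hat (v i) := congrFun h (.inl i)
  have htil : til (u i) + hat (u i) = til (v i) + hat (v i) := congrFun h (.inr i)
  exact eq_of_hat_eq_of_til_eq hhat (by rwa [hhat, add_left_inj] at htil)

theorem extGray_add_add_two_mul {ι κ : Type} (u v : (ι → Z2) × (κ → Z4)) :
    extGray (u + v + (0, 2 * (u.2 * v.2))) = extGray u + extGray v :=
  Prod.ext (add_zero _) (gray_add_add_two_mul u.2 v.2)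

theorem extGray_injective {ι κ : Type} : Function.Injective (extGray (ι := ι) (κ := κ)) :=
  fun _ _ h => Prod.ext (Prod.ext_iff.mp h).1 (gray_injective (Prod.ext_iff.mp h).2)

def identAddHom (α β : ℕ) : (Fin α → Z2) × (Fin β → Z4) →+ QR Z2 α × QR Z4 β where
  toFun := ident
  map_zero' := by simp [ident, toQ2, toQ4, pmk]
  map_add' u v := by simp [ident, toQ2, toQ4, pmk, add_mul, Finset.sum_add_distrib]

theorem ident_zero_snd {α β : ℕ} (w : (Fin α → Z2) × (Fin β → Z4)) :
    ident ((0 : Fin α → Z2), w.2) = ((0 : QR Z2 α), (ident w).2) := by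
  simp [ident, toQ2, pmk]

theorem ident_zero_snd_mem {α β : ℕ} {C : Submodule (Polynomial Z4) (QR Z2 α × QR Z4 β)}
    {x : QR Z2 α} {y : QR Z4 β}
    (hCb : {c | c ∈ C ∧ 2 • c = 0} = (Submodule.span (Polynomial Z4) {(x, 0), (0, y)} : Set _))
    {w : (Fin α → Z2) × (Fin β → Z4)} (hw : ident w ∈ C) {z : Fin β → Z4} (hz : w.2 = 2 * z) :
    ident ((0 : Fin α → Z2), w.2) ∈ C := by
  have hw2 : 2 • w = 0 := by
    refine Prod.ext (ZModModule.char_nsmul_eq_zero 2 _) (funext fun i => ?_)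
    show 2 • w.2 i = 0
    rw [hz]
    show 2 • (2 * z i) = 0
    rw [nsmul_eq_mul, ← mul_assoc]
    exact mul_eq_zero_of_left (by decide) _
  rw [ident_zero_snd]
  refine Submodule.mk_zero_snd_mem_of_two_nsmul_eq_zero hCb hw ?_
  rw [show ident w = identAddHom α β w from rfl, ← map_nsmul, hw2, map_zero]

theorem extGray_linear_iff_gray_CY_linear_general (α β : ℕ)
    (b : Polynomial Z2) (f : Polynomial Z4)
    (C : Submodule (Polynomial Z4) (QR Z2 α × QR Z4 β))
    (hCb : {c : QR Z2 α × QR Z4 β | c ∈ C ∧ 2 • c = 0} =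
      (Submodule.span (Polynomial Z4)
        {((pmk α b : QR Z2 α), (0 : QR Z4 β)), (0, pmk β (2 * f))} : Set _)) :
    (∃ S : Submodule Z2 ((Fin α → Z2) × ((Fin β ⊕ Fin β) → Z2)),
        (S : Set _) = extGray (ι := Fin α) (κ := Fin β) ''
          {v : (Fin α → Z2) × (Fin β → Z4) | ident v ∈ C}) ↔
      ∃ T : Submodule Z2 ((Fin β ⊕ Fin β) → Z2),
        (T : Set _) = gray (ι := Fin β) ''
          (Prod.snd '' {v : (Fin α → Z2) × (Fin β → Z4) | ident v ∈ C}) := by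
  let D := C.toAddSubgroup.comap (identAddHom α β)
  change (∃ S : Submodule Z2 ((Fin α → Z2) × ((Fin β ⊕ Fin β) → Z2)),
      (S : Set _) = extGray '' (D : Set ((Fin α → Z2) × (Fin β → Z4)))) ↔
    ∃ T : Submodule Z2 ((Fin β ⊕ Fin β) → Z2),
      (T : Set _) = gray '' (Prod.snd '' (D : Set ((Fin α → Z2) × (Fin β → Z4))))
  rw [← AddMonoidHom.coe_snd, ← AddSubgroup.coe_map,
    exists_submodule_coe_eq_image_iff extGray_injective _ extGray_add_add_two_mul,
    exists_submodule_coe_eq_image_iff gray_injective _ gray_add_add_two_mul]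
  constructor
  · rintro h _ ⟨u, hu, rfl⟩ _ ⟨v, hv, rfl⟩
    exact ⟨_, h u hu v hv, rfl⟩
  · intro h u hu v hv
    obtain ⟨w, hw, hw2 : w.2 = 2 * (u.2 * v.2)⟩ := h _ ⟨u, hu, rfl⟩ _ ⟨v, hv, rfl⟩
    rw [← hw2]
    exact ident_zero_snd_mem hCb hw hw2

/-- Let `C = ⟨(b|0), (ℓ | fh+2f)⟩` with `β` odd and `fgh = x^β-1`. If the
order-two subcode is `C_b = ⟨(b|0), (0|2f)⟩`, then `Φ(C)` is linear iff `φ(C_Y)` is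
linear. -/
theorem extGray_linear_iff_gray_CY_linear (α β : ℕ) (hβ : Odd β)
    (b ℓ : Polynomial Z2) (f g h : Polynomial Z4)
    (hb : b ∣ Polynomial.X ^ α - 1)
    (hfgh : f * g * h = Polynomial.X ^ β - 1)
    (C : Submodule (Polynomial Z4) (QR Z2 α × QR Z4 β))
    (hC : C = Submodule.span (Polynomial Z4)
      {((pmk α b : QR Z2 α), (0 : QR Z4 β)), (pmk α ℓ, pmk β (f * h + 2 * f))})
    (hCb : {c : QR Z2 α × QR Z4 β | c ∈ C ∧ 2 • c = 0} =
      (Submodule.span (Polynomial Z4)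
        {((pmk α b : QR Z2 α), (0 : QR Z4 β)), (0, pmk β (2 * f))} : Set _)) :
    (∃ S : Submodule Z2 ((Fin α → Z2) × ((Fin β ⊕ Fin β) → Z2)),
        (S : Set _) = extGray (ι := Fin α) (κ := Fin β) ''
          {v : (Fin α → Z2) × (Fin β → Z4) | ident v ∈ C}) ↔
      ∃ T : Submodule Z2 ((Fin β ⊕ Fin β) → Z2),
        (T : Set _) = gray (ι := Fin β) ''
          (Prod.snd '' {v : (Fin α → Z2) × (Fin β → Z4) | ident v ∈ C}) :=
  extGray_linear_iff_gray_CY_linear_general α β b f C hCb
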